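/- arXiv:2011.12116 — 4 statements merged into one kernel-verified Lean document; each statement's English description precedes it below -/
import Mathlib

section
/- Let N = (κ, ν) be a mixed binomial process with counting variable K satisfying E[K] = Var(K) (orthogonality). Then for disjoint f, g ∈ ℰ₊ (i.e., f·g = 0 pointwise) with finite second moments under ν, Var(Nf + Ng) = Var(Nf) + Var(Ng). -/
/-!
Write `A = Nf` and `B = Ng`. Since `K` is independent of the `X i`, one may condition on `K = n`:
of the `n²` terms of `A B` the `n` diagonal ones contribute `ν(fg)` and the `n(n-1)` others,
products of independent variables, contribute `ν f * ν g`. Hence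
`E[AB] = E[K] ν(fg) + E[K(K-1)] ν f ν g` and `E[A] = E[K] ν f`, so that
`cov(A, B) = (Var K - E K) ν f ν g + E[K] ν(fg)`. Orthogonality kills the first term and
disjointness the second. The moments are computed as lower Lebesgue integrals first, which
yields the square integrability of `A` and `B` along the way.
-/

open MeasureTheory ProbabilityTheory ENNReal Finset

theorem ProbabilityTheory.IndepFun.lintegral_comp_eq_lintegral_lintegral
    {Ω ι β : Type*} [MeasurableSpace Ω] {μ : Measure Ω} [IsFiniteMeasure μ]
    [MeasurableSpace ι] [Countable ι] [MeasurableSingletonClass ι] [MeasurableSpace β]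
    {K : Ω → ι} {Y : Ω → β} (hKY : IndepFun K Y μ) (hK : Measurable K) (hY : Measurable Y)
    {Φ : ι → β → ℝ≥0∞} (hΦ : ∀ n, Measurable (Φ n)) :
    ∫⁻ ω, Φ (K ω) (Y ω) ∂μ = ∫⁻ ω, ∫⁻ ω', Φ (K ω) (Y ω') ∂μ ∂μ := by
  have hΦ' : Measurable (Function.uncurry Φ) := measurable_from_prod_countable_right hΦ
  calc ∫⁻ ω, Φ (K ω) (Y ω) ∂μ
      = ∫⁻ p, Function.uncurry Φ p ∂(μ.map fun ω => (K ω, Y ω)) :=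
        (lintegral_map hΦ' (hK.prodMk hY)).symm
    _ = ∫⁻ p, Function.uncurry Φ p ∂((μ.map K).prod (μ.map Y)) := by
        rw [(indepFun_iff_map_prod_eq_prod_map_map hK.aemeasurable hY.aemeasurable).1 hKY]
    _ = ∫⁻ n, ∫⁻ y, Φ n y ∂(μ.map Y) ∂(μ.map K) := lintegral_prod _ hΦ'.aemeasurable
    _ = ∫⁻ n, ∫⁻ ω', Φ n (Y ω') ∂μ ∂(μ.map K) := by simp_rw [lintegral_map (hΦ _) hY]
    _ = ∫⁻ ω, ∫⁻ ω', Φ (K ω) (Y ω') ∂μ ∂μ := lintegral_map (measurable_of_countable _) hK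

section FixedCount

variable {Ω E : Type*} [MeasurableSpace Ω] [MeasurableSpace E] {μ : Measure Ω} {ν : Measure E}
  {X : ℕ → Ω → E} {u v : E → ℝ≥0∞}

lemma lintegral_comp_eq_of_map_eq {Y : Ω → E} (hY : Measurable Y) (hlaw : μ.map Y = ν)
    (hu : Measurable u) : ∫⁻ ω, u (Y ω) ∂μ = ∫⁻ x, u x ∂ν := by
  rw [← hlaw, lintegral_map hu hY]

lemma lintegral_sum_range_comp (hX : ∀ i, Measurable (X i)) (hlaw : ∀ i, μ.map (X i) = ν)
    (hu : Measurable u) (n : ℕ) :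
    ∫⁻ ω, ∑ i ∈ range n, u (X i ω) ∂μ = n * ∫⁻ x, u x ∂ν := by
  rw [lintegral_finsetSum _ fun i _ => by fun_prop]
  simp [lintegral_comp_eq_of_map_eq (hX _) (hlaw _) hu]

lemma lintegral_comp_mul_comp (hX : ∀ i, Measurable (X i)) (hlaw : ∀ i, μ.map (X i) = ν)
    (hindep : Pairwise fun i j => IndepFun (X i) (X j) μ) (hu : Measurable u) (hv : Measurable v)
    (i j : ℕ) :
    ∫⁻ ω, u (X i ω) * v (X j ω) ∂μ
      = if i = j then ∫⁻ x, u x * v x ∂ν else (∫⁻ x, u x ∂ν) * ∫⁻ x, v x ∂ν := by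
  split_ifs with hij
  · subst hij
    exact lintegral_comp_eq_of_map_eq (hX i) (hlaw i) (hu.mul hv)
  · have hindep' : IndepFun (fun ω => u (X i ω)) (fun ω => v (X j ω)) μ :=
      (hindep hij).comp hu hv
    rw [lintegral_mul_eq_lintegral_mul_lintegral_of_indepFun'' (by fun_prop) (by fun_prop) hindep',
      lintegral_comp_eq_of_map_eq (hX i) (hlaw i) hu,
      lintegral_comp_eq_of_map_eq (hX j) (hlaw j) hv]

lemma sum_range_sum_range_ite_eq {M : Type*} [AddCommMonoid M] (n : ℕ) (a b : M) :
    ∑ i ∈ range n, ∑ j ∈ range n, (if i = j then a else b) = n • a + n.descFactorial 2 • b := by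
  have h (i : ℕ) (hi : i ∈ range n) :
      ∑ j ∈ range n, (if i = j then a else b) = a + (n - 1) • b := by
    rw [← add_sum_erase _ _ hi, if_pos rfl,
      sum_congr rfl fun j hj => if_neg (ne_of_mem_erase hj).symm, sum_const,
      card_erase_of_mem hi, card_range]
  rw [sum_congr rfl h, sum_const, card_range, smul_add, ← mul_smul]
  simp [Nat.descFactorial_succ, mul_comm]

lemma lintegral_sum_range_mul_sum_range (hX : ∀ i, Measurable (X i))
    (hlaw : ∀ i, μ.map (X i) = ν) (hindep : Pairwise fun i j => IndepFun (X i) (X j) μ)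
    (hu : Measurable u) (hv : Measurable v) (n : ℕ) :
    ∫⁻ ω, (∑ i ∈ range n, u (X i ω)) * ∑ j ∈ range n, v (X j ω) ∂μ
      = n * ∫⁻ x, u x * v x ∂ν + n.descFactorial 2 * ((∫⁻ x, u x ∂ν) * ∫⁻ x, v x ∂ν) := by
  simp_rw [sum_mul_sum]
  rw [lintegral_finsetSum _ fun i _ => by fun_prop]
  refine (sum_congr rfl fun i _ => lintegral_finsetSum _ fun j _ => by fun_prop).trans ?_
  simp_rw [lintegral_comp_mul_comp hX hlaw hindep hu hv, sum_range_sum_range_ite_eq, nsmul_eq_mul]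

end FixedCount

section RandomCount

variable {Ω E : Type*} [MeasurableSpace Ω] [MeasurableSpace E] {μ : Measure Ω}
  [IsFiniteMeasure μ] {ν : Measure E} {K : Ω → ℕ} {X : ℕ → Ω → E} {u v : E → ℝ≥0∞}

lemma lintegral_sum_range_count (hK : Measurable K) (hX : ∀ i, Measurable (X i))
    (hlaw : ∀ i, μ.map (X i) = ν) (hKX : IndepFun K (fun ω i => X i ω) μ) (hu : Measurable u) :
    ∫⁻ ω, ∑ i ∈ range (K ω), u (X i ω) ∂μ = (∫⁻ ω, (K ω : ℝ≥0∞) ∂μ) * ∫⁻ x, u x ∂ν := by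
  rw [hKX.lintegral_comp_eq_lintegral_lintegral (Φ := fun n y => ∑ i ∈ range n, u (y i)) hK
    (by fun_prop) (fun n => by fun_prop)]
  simp_rw [lintegral_sum_range_comp hX hlaw hu]
  exact lintegral_mul_const _ (measurable_of_countable _ |>.comp hK)

lemma lintegral_sum_range_count_mul_sum_range_count (hK : Measurable K)
    (hX : ∀ i, Measurable (X i)) (hlaw : ∀ i, μ.map (X i) = ν)
    (hindep : Pairwise fun i j => IndepFun (X i) (X j) μ)
    (hKX : IndepFun K (fun ω i => X i ω) μ) (hu : Measurable u) (hv : Measurable v) :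
    ∫⁻ ω, (∑ i ∈ range (K ω), u (X i ω)) * ∑ j ∈ range (K ω), v (X j ω) ∂μ
      = (∫⁻ ω, (K ω : ℝ≥0∞) ∂μ) * ∫⁻ x, u x * v x ∂ν
        + (∫⁻ ω, ((K ω).descFactorial 2 : ℝ≥0∞) ∂μ) * ((∫⁻ x, u x ∂ν) * ∫⁻ x, v x ∂ν) := by
  rw [hKX.lintegral_comp_eq_lintegral_lintegral
    (Φ := fun n y => (∑ i ∈ range n, u (y i)) * ∑ j ∈ range n, v (y j)) hK
    (by fun_prop) (fun n => by fun_prop)]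
  simp_rw [lintegral_sum_range_mul_sum_range hX hlaw hindep hu hv]
  have hKm (φ : ℕ → ℝ≥0∞) : Measurable fun ω => φ (K ω) := (measurable_of_countable φ).comp hK
  rw [lintegral_add_left ((hKm Nat.cast).mul_const _), lintegral_mul_const _ (hKm Nat.cast),
    lintegral_mul_const _ (hKm fun n => (n.descFactorial 2 : ℝ≥0∞))]

end RandomCount

lemma integrable_and_integral_eq_of_lintegral_ofReal_eq {α : Type*} [MeasurableSpace α]
    {μ : Measure α} {h : α → ℝ} (hm : AEStronglyMeasurable h μ) (h0 : 0 ≤ᵐ[μ] h) {c : ℝ}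
    (hc : 0 ≤ c) (hh : ∫⁻ a, ENNReal.ofReal (h a) ∂μ = ENNReal.ofReal c) :
    Integrable h μ ∧ ∫ a, h a ∂μ = c :=
  ⟨⟨hm, (hasFiniteIntegral_iff_ofReal h0).2 (hh ▸ ofReal_lt_top)⟩,
    by rw [integral_eq_lintegral_of_nonneg_ae h0 hm, hh, toReal_ofReal hc]⟩

lemma measurable_sum_range_count {Ω M : Type*} [MeasurableSpace Ω] [MeasurableSpace M]
    [AddCommMonoid M] [MeasurableAdd₂ M] {K : Ω → ℕ} {F : ℕ → Ω → M} (hK : Measurable K)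
    (hF : ∀ i, Measurable (F i)) : Measurable fun ω => ∑ i ∈ range (K ω), F i ω :=
  (measurable_from_prod_countable_left (f := fun p : Ω × ℕ => ∑ i ∈ range p.2, F i p.1)
    fun n => Finset.measurable_sum (range n) fun i _ => hF i).comp (measurable_id.prodMk hK)

lemma lintegral_natCast_eq_ofReal_integral {α : Type*} [MeasurableSpace α] {μ : Measure α}
    {φ : α → ℕ} (hφ : Integrable (fun a => (φ a : ℝ)) μ) :
    ∫⁻ a, (φ a : ℝ≥0∞) ∂μ = ENNReal.ofReal (∫ a, (φ a : ℝ) ∂μ) := by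
  rw [ofReal_integral_eq_lintegral_ofReal hφ (ae_of_all _ fun a => Nat.cast_nonneg _)]
  simp

lemma integrable_descFactorial_two {α : Type*} [MeasurableSpace α] {μ : Measure α}
    [IsFiniteMeasure μ] {φ : α → ℕ} (hφ : MemLp (fun a => (φ a : ℝ)) 2 μ) :
    Integrable (fun a => ((φ a).descFactorial 2 : ℝ)) μ :=
  (hφ.integrable_sq.sub (hφ.integrable one_le_two)).congr
    (ae_of_all _ fun a => by simp only [Pi.sub_apply, Nat.cast_descFactorial_two]; ring)

lemma integral_descFactorial_two {α : Type*} [MeasurableSpace α] {μ : Measure α}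
    [IsProbabilityMeasure μ] {φ : α → ℕ} (hφ : MemLp (fun a => (φ a : ℝ)) 2 μ) :
    ∫ a, ((φ a).descFactorial 2 : ℝ) ∂μ
      = Var[fun a => (φ a : ℝ); μ] + (∫ a, (φ a : ℝ) ∂μ) ^ 2 - ∫ a, (φ a : ℝ) ∂μ := by
  simp_rw [Nat.cast_descFactorial_two, mul_sub, mul_one, ← sq]
  rw [integral_sub hφ.integrable_sq (hφ.integrable one_le_two), variance_eq_sub hφ]
  simp only [Pi.pow_apply]
  ring

section RealValued

variable {Ω E : Type*} [MeasurableSpace Ω] [MeasurableSpace E] {μ : Measure Ω} {ν : Measure E}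
  {K : Ω → ℕ} {X : ℕ → Ω → E} {f g : E → ℝ}

lemma measurable_sum_range_count_comp (hK : Measurable K) (hX : ∀ i, Measurable (X i))
    (hf : Measurable f) : Measurable fun ω => ∑ i ∈ range (K ω), f (X i ω) :=
  measurable_sum_range_count hK fun i => hf.comp (hX i)

lemma integral_sum_range_count [IsFiniteMeasure μ] (hK : Measurable K)
    (hX : ∀ i, Measurable (X i)) (hlaw : ∀ i, μ.map (X i) = ν)
    (hKX : IndepFun K (fun ω i => X i ω) μ)
    (hK1 : Integrable (fun ω => (K ω : ℝ)) μ) (hf : Measurable f) (hf0 : 0 ≤ f)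
    (hf1 : Integrable f ν) :
    ∫ ω, ∑ i ∈ range (K ω), f (X i ω) ∂μ = (∫ ω, (K ω : ℝ) ∂μ) * ∫ x, f x ∂ν := by
  refine (integrable_and_integral_eq_of_lintegral_ofReal_eq
    (measurable_sum_range_count_comp hK hX hf).aestronglyMeasurable
    (ae_of_all _ fun ω => sum_nonneg fun i _ => hf0 _)
    (mul_nonneg (integral_nonneg fun ω => Nat.cast_nonneg _) (integral_nonneg hf0)) ?_).2
  rw [lintegral_congr fun ω => ofReal_sum_of_nonneg fun i _ => hf0 _,
    lintegral_sum_range_count (u := fun x => ENNReal.ofReal (f x)) hK hX hlaw hKX (by fun_prop),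
    lintegral_natCast_eq_ofReal_integral hK1, ← ofReal_integral_eq_lintegral_ofReal hf1
      (ae_of_all _ hf0), ← ofReal_mul (integral_nonneg fun ω => Nat.cast_nonneg _)]

lemma integral_sum_range_count_mul_sum_range_count [IsFiniteMeasure μ] [IsFiniteMeasure ν]
    (hK : Measurable K) (hX : ∀ i, Measurable (X i)) (hlaw : ∀ i, μ.map (X i) = ν)
    (hindep : Pairwise fun i j => IndepFun (X i) (X j) μ)
    (hKX : IndepFun K (fun ω i => X i ω) μ) (hK2 : MemLp (fun ω => (K ω : ℝ)) 2 μ)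
    (hf : Measurable f) (hg : Measurable g) (hf0 : 0 ≤ f) (hg0 : 0 ≤ g)
    (hf2 : MemLp f 2 ν) (hg2 : MemLp g 2 ν) :
    Integrable (fun ω => (∑ i ∈ range (K ω), f (X i ω)) * ∑ j ∈ range (K ω), g (X j ω)) μ ∧
      ∫ ω, (∑ i ∈ range (K ω), f (X i ω)) * ∑ j ∈ range (K ω), g (X j ω) ∂μ
        = (∫ ω, (K ω : ℝ) ∂μ) * ∫ x, f x * g x ∂ν
          + (∫ ω, ((K ω).descFactorial 2 : ℝ) ∂μ) * ((∫ x, f x ∂ν) * ∫ x, g x ∂ν) := by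
  have hsum_nonneg {h : E → ℝ} (h0 : 0 ≤ h) (ω : Ω) : 0 ≤ ∑ i ∈ range (K ω), h (X i ω) :=
    sum_nonneg fun i _ => h0 _
  have hofReal {h : E → ℝ} (hh : Measurable h) (h0 : 0 ≤ h) (h1 : Integrable h ν) :
      ∫⁻ x, ENNReal.ofReal (h x) ∂ν = ENNReal.ofReal (∫ x, h x ∂ν) :=
    (ofReal_integral_eq_lintegral_ofReal h1 (ae_of_all _ h0)).symm
  have hW : ∫⁻ x, ENNReal.ofReal (f x) * ENNReal.ofReal (g x) ∂ν
      = ENNReal.ofReal (∫ x, f x * g x ∂ν) := by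
    simp_rw [← ofReal_mul (hf0 _)]
    exact hofReal (hf.mul hg) (fun x => mul_nonneg (hf0 x) (hg0 x)) (hf2.integrable_mul hg2)
  have hK0 : 0 ≤ ∫ ω, (K ω : ℝ) ∂μ := integral_nonneg fun ω => Nat.cast_nonneg _
  have hKK0 : 0 ≤ ∫ ω, ((K ω).descFactorial 2 : ℝ) ∂μ :=
    integral_nonneg fun ω => Nat.cast_nonneg _
  have hf0' : 0 ≤ ∫ x, f x ∂ν := integral_nonneg hf0
  have hdiag0 : 0 ≤ (∫ ω, (K ω : ℝ) ∂μ) * ∫ x, f x * g x ∂ν :=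
    mul_nonneg hK0 (integral_nonneg fun x => mul_nonneg (hf0 x) (hg0 x))
  have hoff0 : 0 ≤ (∫ ω, ((K ω).descFactorial 2 : ℝ) ∂μ) * ((∫ x, f x ∂ν) * ∫ x, g x ∂ν) :=
    mul_nonneg hKK0 (mul_nonneg hf0' (integral_nonneg hg0))
  refine integrable_and_integral_eq_of_lintegral_ofReal_eq
    ((measurable_sum_range_count_comp hK hX hf).mul
      (measurable_sum_range_count_comp hK hX hg)).aestronglyMeasurable
    (ae_of_all _ fun ω => mul_nonneg (hsum_nonneg hf0 ω) (hsum_nonneg hg0 ω))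
    (add_nonneg hdiag0 hoff0) ?_
  simp_rw [Pi.mul_apply, ofReal_mul (hsum_nonneg hf0 _), ofReal_sum_of_nonneg fun i _ => hf0 _,
    ofReal_sum_of_nonneg fun i _ => hg0 _]
  rw [lintegral_sum_range_count_mul_sum_range_count (u := fun x => ENNReal.ofReal (f x))
      (v := fun x => ENNReal.ofReal (g x)) hK hX hlaw hindep hKX (by fun_prop) (by fun_prop),
    lintegral_natCast_eq_ofReal_integral (hK2.integrable one_le_two),
    lintegral_natCast_eq_ofReal_integral (integrable_descFactorial_two hK2), hW,
    hofReal hf hf0 (hf2.integrable one_le_two), hofReal hg hg0 (hg2.integrable one_le_two),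
    ← ofReal_mul hK0, ← ofReal_mul hf0', ← ofReal_mul hKK0, ← ofReal_add hdiag0 hoff0]

lemma memLp_two_sum_range_count [IsFiniteMeasure μ] [IsFiniteMeasure ν] (hK : Measurable K)
    (hX : ∀ i, Measurable (X i)) (hlaw : ∀ i, μ.map (X i) = ν)
    (hindep : Pairwise fun i j => IndepFun (X i) (X j) μ)
    (hKX : IndepFun K (fun ω i => X i ω) μ) (hK2 : MemLp (fun ω => (K ω : ℝ)) 2 μ)
    (hf : Measurable f) (hf0 : 0 ≤ f) (hf2 : MemLp f 2 ν) :
    MemLp (fun ω => ∑ i ∈ range (K ω), f (X i ω)) 2 μ := by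
  refine (memLp_two_iff_integrable_sq
    (measurable_sum_range_count_comp hK hX hf).aestronglyMeasurable).2 ?_
  simpa only [sq] using
    (integral_sum_range_count_mul_sum_range_count hK hX hlaw hindep hKX hK2 hf hf hf0 hf0
      hf2 hf2).1

lemma covariance_sum_range_count [IsProbabilityMeasure μ] [IsFiniteMeasure ν] (hK : Measurable K)
    (hX : ∀ i, Measurable (X i)) (hlaw : ∀ i, μ.map (X i) = ν)
    (hindep : Pairwise fun i j => IndepFun (X i) (X j) μ)
    (hKX : IndepFun K (fun ω i => X i ω) μ) (hK2 : MemLp (fun ω => (K ω : ℝ)) 2 μ)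
    (hf : Measurable f) (hg : Measurable g) (hf0 : 0 ≤ f) (hg0 : 0 ≤ g)
    (hf2 : MemLp f 2 ν) (hg2 : MemLp g 2 ν) :
    cov[fun ω => ∑ i ∈ range (K ω), f (X i ω), fun ω => ∑ i ∈ range (K ω), g (X i ω); μ]
      = (Var[fun ω => (K ω : ℝ); μ] - ∫ ω, (K ω : ℝ) ∂μ) * ((∫ x, f x ∂ν) * ∫ x, g x ∂ν)
        + (∫ ω, (K ω : ℝ) ∂μ) * ∫ x, f x * g x ∂ν := by
  have hK1 := hK2.integrable one_le_two
  rw [covariance_eq_sub (memLp_two_sum_range_count hK hX hlaw hindep hKX hK2 hf hf0 hf2)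
    (memLp_two_sum_range_count hK hX hlaw hindep hKX hK2 hg hg0 hg2)]
  simp only [Pi.mul_apply]
  rw [(integral_sum_range_count_mul_sum_range_count hK hX hlaw hindep hKX hK2 hf hg hf0 hg0
      hf2 hg2).2, integral_sum_range_count hK hX hlaw hKX hK1 hf hf0 (hf2.integrable one_le_two),
    integral_sum_range_count hK hX hlaw hKX hK1 hg hg0 (hg2.integrable one_le_two),
    integral_descFactorial_two hK2]
  ring

end RealValued

/-- For an orthogonal mixed binomial process (`E K = Var K`) and disjoint
nonnegative `f, g` (pointwise `f·g = 0`) with finite second moments,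
`Var(Nf + Ng) = Var(Nf) + Var(Ng)`. -/
theorem stmt3
    {Ω : Type*} [MeasureSpace Ω] [IsProbabilityMeasure (ℙ : Measure Ω)]
    {E : Type*} [MeasurableSpace E]
    (ν : Measure E) [IsProbabilityMeasure ν]
    (K : Ω → ℕ) (X : ℕ → Ω → E)
    (hK : Measurable K)
    (hX : ∀ i, Measurable (X i))
    (hlaw : ∀ i, Measure.map (X i) ℙ = ν)
    (hiid : iIndepFun X ℙ)
    (hKX : IndepFun K (fun ω i => X i ω) ℙ)
    (hK2 : Integrable (fun ω => ((K ω : ℝ))^2) ℙ)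
    (horth : ∫ ω, (K ω : ℝ) ∂ℙ = variance (fun ω => (K ω : ℝ)) ℙ)
    (f g : E → ℝ) (hf : Measurable f) (hg : Measurable g)
    (hf0 : ∀ x, 0 ≤ f x) (hg0 : ∀ x, 0 ≤ g x)
    (hdisj : ∀ x, f x * g x = 0)
    (hf2 : Integrable (fun x => (f x)^2) ν)
    (hg2 : Integrable (fun x => (g x)^2) ν) :
    variance (fun ω => (∑ i ∈ Finset.range (K ω), f (X i ω))
        + ∑ i ∈ Finset.range (K ω), g (X i ω)) ℙ
      = variance (fun ω => ∑ i ∈ Finset.range (K ω), f (X i ω)) ℙ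
        + variance (fun ω => ∑ i ∈ Finset.range (K ω), g (X i ω)) ℙ := by
  have hK2' : MemLp (fun ω => (K ω : ℝ)) 2 ℙ :=
    (memLp_two_iff_integrable_sq (measurable_of_countable _ |>.comp hK).aestronglyMeasurable).2 hK2
  have hf2' : MemLp f 2 ν := (memLp_two_iff_integrable_sq hf.aestronglyMeasurable).2 hf2
  have hg2' : MemLp g 2 ν := (memLp_two_iff_integrable_sq hg.aestronglyMeasurable).2 hg2
  have hindep : Pairwise fun i j => IndepFun (X i) (X j) ℙ := fun i j hij => hiid.indepFun hij
  rw [variance_fun_add (memLp_two_sum_range_count hK hX hlaw hindep hKX hK2' hf hf0 hf2')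
      (memLp_two_sum_range_count hK hX hlaw hindep hKX hK2' hg hg0 hg2'),
    covariance_sum_range_count hK hX hlaw hindep hKX hK2' hf hg hf0 hg0 hf2' hg2', ← horth]
  simp [hdisj]
end

section
/- Let N be a mixed binomial process with counting variable K having probability generating function ψ, independent of i.i.d. X_i ~ ν. Then for every f ∈ ℰ₊, the Laplace functional satisfies E[exp(−Nf)] = ψ(ν(e^{−f})), where Nf = ∑_{i=1}^{K} f(X_i). -/
open MeasureTheory ProbabilityTheory

/-! Condition on `K = n`. On that event the integrand is `∏_{i<n} e^{-f(X_i)}`, a function of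
the `X_i` alone, hence independent of `K`; by independence of the `X_i` its mean is
`ν(e^{-f})^n`. Summing over `n` gives `∑ₙ P(K = n) ν(e^{-f})^n`, which is also `E[ν(e^{-f})^K]`. -/

namespace ProbabilityTheory

section CountableIndex

variable {Ω β ι : Type*} {mΩ : MeasurableSpace Ω} [MeasurableSpace β]
  [MeasurableSpace ι] [Countable ι] [MeasurableSingletonClass ι]
  {μ : Measure Ω} {K : Ω → ι} {V : Ω → β}

theorem integrable_uncurry_comp_of_bound [IsFiniteMeasure μ] {G : ι → β → ℝ}
    (hK : Measurable K) (hV : Measurable V) (hG : ∀ n, Measurable (G n))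
    (C : ℝ) (hGC : ∀ n v, ‖G n v‖ ≤ C) :
    Integrable (fun ω => G (K ω) (V ω)) μ :=
  have hGm : Measurable fun p : ι × β => G p.1 p.2 := measurable_from_prod_countable_right hG
  .of_bound (hGm.comp (hK.prodMk hV)).aestronglyMeasurable C (.of_forall fun _ => hGC _ _)

theorem IndepFun.integral_uncurry_comp_eq_tsum {F : Type*} [NormedAddCommGroup F]
    [NormedSpace ℝ F] {G : ι → β → F} (hKV : IndepFun K V μ) (hK : Measurable K)
    (hV : AEMeasurable V μ) (hG : ∀ n, AEStronglyMeasurable (G n) (μ.map V))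
    (hint : Integrable (fun ω => G (K ω) (V ω)) μ) :
    ∫ ω, G (K ω) (V ω) ∂μ = ∑' n, μ.real (K ⁻¹' {n}) • ∫ ω, G n (V ω) ∂μ := by
  have hfib : ∀ n, MeasurableSet (K ⁻¹' {n}) := fun n => hK (measurableSet_singleton n)
  have hcover : (⋃ n, K ⁻¹' {n}) = Set.univ := by ext; simp
  rw [← setIntegral_univ, ← hcover,
    integral_iUnion hfib (pairwise_disjoint_fiber K) (hcover ▸ hint.integrableOn)]
  refine tsum_congr fun n => ?_
  calc ∫ ω in K ⁻¹' {n}, G (K ω) (V ω) ∂μ = ∫ ω in K ⁻¹' {n}, G n (V ω) ∂μ :=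
        setIntegral_congr_fun (hfib n) fun _ (hω : K _ = n) => by rw [hω]
    _ = μ.real (K ⁻¹' {n}) • ∫ ω, G n (V ω) ∂μ :=
        ((IndepFun_iff_Indep K V μ).1 hKV).setIntegral_eq_smul hK.comap_le hV
          ⟨{n}, measurableSet_singleton n, rfl⟩ (hG n)

end CountableIndex

theorem iIndepFun.integral_prod_comp_eq_pow {Ω E 𝕜 ι : Type*} {mΩ : MeasurableSpace Ω}
    [MeasurableSpace E] [RCLike 𝕜] {μ : Measure Ω} {ν : Measure E} {X : ι → Ω → E}
    (hiid : iIndepFun X μ) (hX : ∀ i, AEMeasurable (X i) μ) (hlaw : ∀ i, μ.map (X i) = ν)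
    {g : E → 𝕜} (hg : AEStronglyMeasurable g ν) (s : Finset ι) :
    ∫ ω, ∏ i ∈ s, g (X i ω) ∂μ = (∫ x, g x ∂ν) ^ s.card := by
  have hs : iIndepFun (fun i : s => X i) μ := hiid.precomp Subtype.val_injective
  have hgX : ∀ i, ∫ ω, g (X i ω) ∂μ = ∫ x, g x ∂ν := fun i => by
    rw [← hlaw i, integral_map (hX i) (hlaw i ▸ hg)]
  calc ∫ ω, ∏ i ∈ s, g (X i ω) ∂μ = ∫ ω, ∏ i : s, g (X i ω) ∂μ := by
        simp_rw [← Finset.prod_coe_sort s]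
    _ = ∏ i : s, ∫ ω, g (X i ω) ∂μ :=
        hs.integral_fun_prod_comp (f := fun _ => g) (fun i => hX i) (fun i => hlaw i ▸ hg)
    _ = (∫ x, g x ∂ν) ^ s.card := by simp [hgX]

end ProbabilityTheory

theorem integral_exp_neg_le_one {E : Type*} [MeasurableSpace E] (ν : Measure E)
    [IsProbabilityMeasure ν] {f : E → ℝ} (hf0 : ∀ x, 0 ≤ f x) :
    ∫ x, Real.exp (-(f x)) ∂ν ≤ 1 := by
  simpa using integral_mono_of_nonneg (μ := ν) (.of_forall fun _ => (Real.exp_pos _).le)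
    (integrable_const (1 : ℝ)) (.of_forall fun x => Real.exp_le_one_iff.2 (by simp [hf0 x]))

/-- Laplace functional of a mixed binomial process:
`E[exp(−Nf)] = ψ(ν e^{−f})`, where `ψ(t) = E[t^K]` is the pgf of `K`. -/
theorem stmt4
    {Ω : Type*} [MeasureSpace Ω] [IsProbabilityMeasure (ℙ : Measure Ω)]
    {E : Type*} [MeasurableSpace E]
    (ν : Measure E) [IsProbabilityMeasure ν]
    (K : Ω → ℕ) (X : ℕ → Ω → E)
    (hK : Measurable K)
    (hX : ∀ i, Measurable (X i))
    (hlaw : ∀ i, Measure.map (X i) ℙ = ν)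
    (hiid : iIndepFun X ℙ)
    (hKX : IndepFun K (fun ω i => X i ω) ℙ)
    (ψ : ℝ → ℝ) (hψ : ∀ t, ψ t = ∫ ω, t ^ (K ω) ∂ℙ)
    (f : E → ℝ) (hf : Measurable f) (hf0 : ∀ x, 0 ≤ f x) :
    ∫ ω, Real.exp (-(∑ i ∈ Finset.range (K ω), f (X i ω))) ∂ℙ
      = ψ (∫ x, Real.exp (-(f x)) ∂ν) := by
  set t := ∫ x, Real.exp (-(f x)) ∂ν
  have ht0 : 0 ≤ t := integral_nonneg fun _ => (Real.exp_pos _).le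
  have ht1 : t ≤ 1 := integral_exp_neg_le_one ν hf0
  have hV : Measurable fun ω i => X i ω := measurable_pi_lambda _ hX
  have hef : Measurable fun x => Real.exp (-(f x)) := by fun_prop
  have hLHS : ∫ ω, Real.exp (-(∑ i ∈ Finset.range (K ω), f (X i ω))) ∂ℙ
      = ∑' n, (ℙ : Measure Ω).real (K ⁻¹' {n}) * t ^ n := by
    simp_rw [← Finset.sum_neg_distrib, Real.exp_sum]
    have hG : ∀ n, Measurable fun v : ℕ → E => ∏ i ∈ Finset.range n, Real.exp (-(f (v i))) :=
      fun n => by fun_prop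
    rw [hKX.integral_uncurry_comp_eq_tsum hK hV.aemeasurable
      (fun n => (hG n).aestronglyMeasurable)
      (integrable_uncurry_comp_of_bound (K := K) hK hV hG 1 fun n v => ?_)]
    · simp only [smul_eq_mul, Finset.card_range, hiid.integral_prod_comp_eq_pow
        (fun i => (hX i).aemeasurable) hlaw hef.aestronglyMeasurable]
      rfl
    · simpa using Finset.prod_le_one (fun _ _ => (Real.exp_pos _).le)
        fun i _ => Real.exp_le_one_iff.2 (by simp [hf0 (v i)])
  have hRHS : ψ t = ∑' n, (ℙ : Measure Ω).real (K ⁻¹' {n}) * t ^ n := by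
    rw [hψ, hKX.integral_uncurry_comp_eq_tsum (G := fun n _ => t ^ n) hK hV.aemeasurable
      (fun _ => aestronglyMeasurable_const)
      (integrable_uncurry_comp_of_bound (K := K) (G := fun n (_ : ℕ → E) => t ^ n) hK hV
        (fun _ => measurable_const) 1 fun n _ => ?_)]
    · simp
    · simpa [abs_of_nonneg ht0] using pow_le_one₀ ht0 ht1
  rw [hLHS, hRHS]
end

section
/- Let ν = Uniform[0,t] × Uniform(0,1] and f(x,y) = (1/λ)·e^{−x}·log(1/y) for fixed λ > 0. Then ν(e^{−αf}) = (1/t)·log((λ + e^{−t}α)/(λ + α)) + 1 for α ≥ 0. -/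
/-!
Since `log (1/y) = -log y`, the inner integral is `∫₀¹ y^r dy = 1/(1+r)` with
`r = α e^{-x}/λ` (the Laplace transform of the exponential law of `(1/λ) log (1/U)`).
The outer integrand `1/(1 + c e^{-x})`, `c = α/λ`, has the antiderivative
`x + log (1 + c e^{-x})`; its `x` term divided by `t` is the `+ 1` of the formula.
-/

open MeasureTheory Real

theorem integral_exp_mul_log_zero_one {r : ℝ} (hr : -1 < r) :
    ∫ y in (0 : ℝ)..1, exp (r * log y) = 1 / (r + 1) := by
  have hrpow : ∀ y ∈ Set.uIoc (0 : ℝ) 1, exp (r * log y) = y ^ r := fun y hy => by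
    rw [rpow_def_of_pos (Set.uIoc_of_le (zero_le_one' ℝ) ▸ hy).1, mul_comm]
  rw [intervalIntegral.integral_congr_ae (.of_forall hrpow), integral_rpow (.inl hr),
    one_rpow, zero_rpow (by linarith), sub_zero]

theorem integral_exp_neg_mul_log_one_div_zero_one {c : ℝ} (hc : -1 < c) :
    ∫ y in (0 : ℝ)..1, exp (-(c * log (1 / y))) = 1 / (1 + c) := by
  simp only [one_div, log_inv, mul_neg, neg_neg]
  rw [integral_exp_mul_log_zero_one hc, add_comm, one_div]

theorem hasDerivAt_add_log_one_add_mul_exp_neg {c : ℝ} (hc : 0 ≤ c) (x : ℝ) :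
    HasDerivAt (fun x => x + log (1 + c * exp (-x))) (1 / (1 + c * exp (-x))) x := by
  have hpos : 0 < 1 + c * exp (-x) := by positivity
  have hlog := (((hasDerivAt_neg x).exp.const_mul c).const_add 1).log hpos.ne'
  refine ((hasDerivAt_id' x).add hlog).congr_deriv ?_
  field_simp
  ring

theorem integral_one_div_one_add_mul_exp_neg {c : ℝ} (hc : 0 ≤ c) (a b : ℝ) :
    ∫ x in a..b, 1 / (1 + c * exp (-x))
      = b - a + log (1 + c * exp (-b)) - log (1 + c * exp (-a)) := by
  have hpos : ∀ x, 0 < 1 + c * exp (-x) := fun x => by positivity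
  rw [intervalIntegral.integral_eq_sub_of_hasDerivAt
    (fun x _ => hasDerivAt_add_log_one_add_mul_exp_neg hc x)]
  · ring
  · exact (continuous_const.div (by fun_prop) fun x => (hpos x).ne').intervalIntegrable _ _

/-- For `ν = Uniform[0,t] × Uniform(0,1]` and
`f(x,y) = (1/λ)·e^{−x}·log(1/y)` with `λ > 0`,
`ν(e^{−αf}) = (1/t)·log((λ + e^{−t}α)/(λ + α)) + 1` for `α ≥ 0`. -/
theorem stmt9 (t l α : ℝ) (ht : 0 < t) (hl : 0 < l) (hα : 0 ≤ α) :
    (1 / t) * ∫ x in (0 : ℝ)..t, ∫ y in (0 : ℝ)..1,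
        Real.exp (-(α * ((1 / l) * Real.exp (-x) * Real.log (1 / y))))
      = (1 / t) * Real.log ((l + Real.exp (-t) * α) / (l + α)) + 1 := by
  have hc : 0 ≤ α / l := div_nonneg hα hl.le
  have hinner : ∀ x : ℝ, ∫ y in (0 : ℝ)..1,
      exp (-(α * ((1 / l) * exp (-x) * log (1 / y)))) = 1 / (1 + α / l * exp (-x)) := fun x => by
    rw [← integral_exp_neg_mul_log_one_div_zero_one (neg_one_lt_zero.trans_le (by positivity))]
    congr! 4
    ring
  have hratio : (1 + α / l * exp (-t)) / (1 + α / l) = (l + exp (-t) * α) / (l + α) := by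
    field_simp
  simp_rw [hinner]
  rw [integral_one_div_one_add_mul_exp_neg hc, neg_zero, exp_zero, mul_one,
    ← hratio, log_div (by positivity) (by positivity)]
  field_simp
  ring
end

section
/- For every orthogonal die κ_{mn} (discrete uniform on {m,…,n} with mean equal to variance, m < n), the support size n − m + 1 is coprime to 2 and to 3. -/
/-- For every orthogonal die (discrete uniform on `{m,…,n}`, `m < n`, with mean
equal to variance, i.e. `6(m+n) = (n−m+1)² − 1`), the support size `n − m + 1`
is coprime to `2` and to `3`. -/
theorem stmt15 (m n : ℕ) (hmn : m < n)
    (horth : 6 * ((m : ℤ) + n) = ((n : ℤ) - m + 1) ^ 2 - 1) :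
    Nat.Coprime (n - m + 1) 2 ∧ Nat.Coprime (n - m + 1) 3 := by
  have hK : ((n - m + 1 : ℕ) : ℤ) = (n : ℤ) - m + 1 := by
    push_cast [Nat.cast_sub hmn.le]; ring
  have hsq : ((n - m + 1 : ℕ) : ℤ) ^ 2 = 6 * ((m : ℤ) + n) + 1 := by
    rw [hK]; linarith
  constructor
  · rw [Nat.coprime_comm, (Nat.prime_two).coprime_iff_not_dvd]
    rintro ⟨t, ht⟩
    have h4 : 4 * ((t : ℤ) * t) = 6 * ((m : ℤ) + n) + 1 := by
      rw [← hsq, ht]; push_cast; ring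
    obtain ⟨u, hu⟩ : ∃ u : ℤ, u = (t : ℤ) * t := ⟨_, rfl⟩
    rw [← hu] at h4
    omega
  · rw [Nat.coprime_comm, (Nat.prime_three).coprime_iff_not_dvd]
    rintro ⟨t, ht⟩
    have h9 : 9 * ((t : ℤ) * t) = 6 * ((m : ℤ) + n) + 1 := by
      rw [← hsq, ht]; push_cast; ring
    obtain ⟨u, hu⟩ : ∃ u : ℤ, u = (t : ℤ) * t := ⟨_, rfl⟩
    rw [← hu] at h9
    omega
end
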